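/- Let x̃^n be a sample from the boosted distribution: the law of x^{n,⋆} (the minimizer of Z over M i.i.d. samples from ρ^⊗n, with P(Z_{x^n} > δ) ≤ η for a single sample) conditioned on the event {Z_{x^{n,⋆}} ≤ δ}, for δ ∈ (0,1), η ∈ (0,1). Then for any u ∈ L²_μ(X), the weighted least-squares projection satisfies the quasi-optimality property E(‖u − Q^{x̃^n}_{V_m} u‖²) ≤ (1 + (1−δ)^{-1}(1 − η^M)^{-1} M) ‖u − P_{V_m}u‖². -/

import Mathlib

/-!
On the event `Z_{x^n} ≤ δ` the weighted least-squares projection is quasi-optimal sample by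
sample. Write `u - Q u = (u - P u) + (P u - Q u)` with `P u - Q u = ∑ bⱼ φⱼ ∈ V_m`. In `L²_μ` the
two terms are orthogonal and `‖P u - Q u‖² = |b|²`. For the discrete semi-inner product `Q` is an
orthogonal projection, so `(1 - δ)|b|² ≤ bᵀ G b = ‖P u - Q u‖²_{x^n} ≤ ‖u - P u‖²_{x^n}`.

In expectation, the discrete norm on the selected sample is at most the sum of the discrete
norms on all `M` samples, each with mean `‖u - P u‖²` since `w` cancels the density of `ρ`.
Conditioning on `Z ≤ δ` costs the factor `P(Z_{x^{n,⋆}} ≤ δ)⁻¹ ≤ (1 - η^M)⁻¹`, because the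
minimum of `Z` over the `M` samples exceeds `δ` only if every sample does.
-/

open MeasureTheory ProbabilityTheory

noncomputable section

/-- Spectral norm (matrix operator norm w.r.t. the Euclidean norm) of a real square matrix. -/
def specNorm {m : ℕ} (A : Matrix (Fin m) (Fin m) ℝ) : ℝ :=
  ‖Matrix.toEuclideanCLM (𝕜 := ℝ) A‖

variable {d : ℕ}

/-- Squared `L²_μ` norm: `‖v‖² = ∫ v² dμ`. -/
def l2normSq {X : Set (Fin d → ℝ)} (μ : Measure X) (v : X → ℝ) : ℝ :=
  ∫ t, v t ^ 2 ∂μ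

/-- Squared discrete semi-norm `‖v‖²_{x^n} = (1/n) ∑ᵢ w(xⁱ) v(xⁱ)²`. -/
def discNormSq {X : Set (Fin d → ℝ)} (w : X → ℝ) {n : ℕ} (x : Fin n → X) (v : X → ℝ) : ℝ :=
  (1 / (n : ℝ)) * ∑ i, w (x i) * v (x i) ^ 2

/-- Empirical Gram matrix `G_{x^n} = (1/n) ∑ᵢ w(xⁱ) φ(xⁱ) ⊗ φ(xⁱ)`. -/
def gram {X : Set (Fin d → ℝ)} {m : ℕ} (w : X → ℝ) (φ : Fin m → X → ℝ) {n : ℕ}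
    (x : Fin n → X) : Matrix (Fin m) (Fin m) ℝ :=
  Matrix.of fun j k => (1 / (n : ℝ)) * ∑ i, w (x i) * (φ j (x i) * φ k (x i))

/-- Stability statistic `Z_{x^n} = ‖G_{x^n} − I‖₂`. -/
def Zstat {X : Set (Fin d → ℝ)} {m : ℕ} (w : X → ℝ) (φ : Fin m → X → ℝ) {n : ℕ}
    (x : Fin n → X) : ℝ :=
  specNorm (gram w φ x - 1)

/-- Orthogonal projection onto `V_m`: `P_{V_m} u = ∑ⱼ (∫ u φⱼ dμ) φⱼ`. -/
def proj {X : Set (Fin d → ℝ)} (μ : Measure X) {m : ℕ} (φ : Fin m → X → ℝ) (u : X → ℝ) :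
    X → ℝ :=
  fun t => ∑ j, (∫ s, u s * φ j s ∂μ) * φ j t

/-- Weighted supremum norm `‖v‖_{∞,w} = sup_x w(x)^{1/2} |v(x)|`. -/
def wSupNorm {X : Set (Fin d → ℝ)} (w : X → ℝ) (v : X → ℝ) : ℝ :=
  ⨆ t : X, Real.sqrt (w t) * |v t|

/-- The approximation space `V_m`, the span of `φ_1, …, φ_m`. -/
def Vspan {X : Set (Fin d → ℝ)} {m : ℕ} (φ : Fin m → X → ℝ) : Submodule ℝ (X → ℝ) :=
  Submodule.span ℝ (Set.range φ)

/-- Law of `M` i.i.d. samples, each an `n`-tuple of i.i.d. points with distribution `ρ`. -/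
def bigP {X : Set (Fin d → ℝ)} (ρ : Measure X) (M n : ℕ) : Measure (Fin M → Fin n → X) :=
  Measure.pi fun _ => Measure.pi fun _ => ρ

/-- The constant `C(ε,M) = M (1−ε)^{1−ε}/(M−ε)^{1−ε}` (with `0⁰ = 1`). -/
def Cconst (M : ℕ) (ε : ℝ) : ℝ :=
  (M : ℝ) * (1 - ε) ^ (1 - ε) / ((M : ℝ) - ε) ^ (1 - ε)

open scoped Matrix

namespace LinearMap.BilinForm

variable {E : Type*} [AddCommGroup E] [Module ℝ E] {B : LinearMap.BilinForm ℝ E}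

theorem IsSymm.apply_sub_sub (hB : B.IsSymm) (r s : E) :
    B (r - s) (r - s) = B r r - 2 * B r s + B s s := by
  simp only [sub_left, sub_right, hB.eq s r]
  ring

theorem IsSymm.apply_eq_zero_of_minimizes (hB : B.IsSymm) {V : Submodule ℝ E} {u q : E}
    (hq : q ∈ V) (hmin : ∀ g ∈ V, B (u - q) (u - q) ≤ B (u - g) (u - g))
    {g : E} (hg : g ∈ V) : B (u - q) g = 0 := by
  -- perturbing the minimizer along `g` gives a quadratic in `t` that is nonnegative
  have hquad : ∀ t : ℝ, 0 ≤ B g g * (t * t) + (-2 * B (u - q) g) * t + 0 := by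
    intro t
    have h := hmin (q + t • g) (V.add_mem hq (V.smul_mem t hg))
    rw [show u - (q + t • g) = (u - q) - t • g by abel, hB.apply_sub_sub (u - q) (t • g)] at h
    simp only [map_smul, LinearMap.smul_apply, smul_eq_mul] at h
    nlinarith
  have hdiscrim := discrim_le_zero hquad
  rw [discrim] at hdiscrim
  nlinarith [sq_nonneg (B (u - q) g)]

theorem IsSymm.apply_sub_le_of_minimizes (hB : B.IsSymm) (hpos : ∀ v, 0 ≤ B v v)
    {V : Submodule ℝ E} {u q p : E} (hq : q ∈ V) (hp : p ∈ V)
    (hmin : ∀ g ∈ V, B (u - q) (u - q) ≤ B (u - g) (u - g)) :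
    B (p - q) (p - q) ≤ B (u - p) (u - p) := by
  have horth := hB.apply_eq_zero_of_minimizes hq hmin (V.sub_mem hp hq)
  have h := hB.apply_sub_sub (u - q) (p - q)
  rw [show u - q - (p - q) = u - p by abel, horth] at h
  linarith [hpos (u - q)]

theorem sum_smul_apply_sum_smul {ι : Type*} [Fintype ι] (B : LinearMap.BilinForm ℝ E)
    (φ : ι → E) (b : ι → ℝ) :
    B (∑ j, b j • φ j) (∑ j, b j • φ j) = b ⬝ᵥ Matrix.of (fun j k => B (φ j) (φ k)) *ᵥ b := by
  simp only [sum_left, sum_right, smul_left, smul_right, dotProduct, Matrix.mulVec,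
    Matrix.of_apply, Finset.mul_sum]
  rw [Finset.sum_comm]
  exact Finset.sum_congr rfl fun j _ => Finset.sum_congr rfl fun k _ => by ring

end LinearMap.BilinForm

theorem one_sub_mul_dotProduct_le_of_specNorm_le {m : ℕ} {G : Matrix (Fin m) (Fin m) ℝ} {δ : ℝ}
    (hG : specNorm (G - 1) ≤ δ) (b : Fin m → ℝ) : (1 - δ) * (b ⬝ᵥ b) ≤ b ⬝ᵥ G *ᵥ b := by
  set A := Matrix.toEuclideanCLM (n := Fin m) (𝕜 := ℝ) (G - 1)
  have hA : ‖A‖ ≤ δ := hG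
  set x : EuclideanSpace ℝ (Fin m) := WithLp.toLp 2 b
  have hx : ‖x‖ ^ 2 = b ⬝ᵥ b := by
    rw [EuclideanSpace.norm_sq_eq]
    simp [x, dotProduct, sq]
  have hbound : |b ⬝ᵥ (G - 1) *ᵥ b| ≤ δ * (b ⬝ᵥ b) := by
    rw [← Matrix.inner_toEuclideanCLM (x := x) (y := x), ← hx]
    calc _ ≤ ‖x‖ * ‖A x‖ := abs_real_inner_le_norm _ _
      _ ≤ ‖x‖ * (δ * ‖x‖) := by
          gcongr
          exact (A.le_opNorm x).trans (mul_le_mul_of_nonneg_right hA (norm_nonneg x))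
      _ = δ * ‖x‖ ^ 2 := by ring
  rw [Matrix.sub_mulVec, Matrix.one_mulVec, dotProduct_sub] at hbound
  linarith [(abs_le.mp hbound).1]

section Discrete

variable {X : Set (Fin d → ℝ)} {n : ℕ}

def discForm (w : X → ℝ) (y : Fin n → X) : LinearMap.BilinForm ℝ (X → ℝ) :=
  LinearMap.mk₂ ℝ (fun f g => (1 / (n : ℝ)) * ∑ i, w (y i) * (f (y i) * g (y i)))
    (fun f₁ f₂ g => by simp only [Pi.add_apply, add_mul, mul_add, Finset.sum_add_distrib])
    (fun c f g => by
      simp only [Pi.smul_apply, smul_eq_mul, Finset.mul_sum]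
      exact Finset.sum_congr rfl fun i _ => by ring)
    (fun f g₁ g₂ => by simp only [Pi.add_apply, mul_add, Finset.sum_add_distrib])
    (fun c f g => by
      simp only [Pi.smul_apply, smul_eq_mul, Finset.mul_sum]
      exact Finset.sum_congr rfl fun i _ => by ring)

@[simp]
theorem discForm_apply (w : X → ℝ) (y : Fin n → X) (f g : X → ℝ) :
    discForm w y f g = (1 / (n : ℝ)) * ∑ i, w (y i) * (f (y i) * g (y i)) :=
  rfl

theorem discForm_isSymm (w : X → ℝ) (y : Fin n → X) : (discForm w y).IsSymm :=
  ⟨fun f g => by simp only [discForm_apply, mul_comm (f _)]⟩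

theorem discNormSq_eq_discForm (w : X → ℝ) (y : Fin n → X) (v : X → ℝ) :
    discNormSq w y v = discForm w y v v := by
  simp only [discNormSq, discForm_apply, sq]

theorem discNormSq_nonneg {w : X → ℝ} (hw : ∀ t, 0 ≤ w t) (y : Fin n → X) (v : X → ℝ) :
    0 ≤ discNormSq w y v :=
  mul_nonneg (by positivity) (Finset.sum_nonneg fun i _ => mul_nonneg (hw _) (sq_nonneg _))

theorem discNormSq_sub_le_of_minimizes {w : X → ℝ} (hw : ∀ t, 0 ≤ w t) (y : Fin n → X)
    {V : Submodule ℝ (X → ℝ)} {u q p : X → ℝ} (hq : q ∈ V) (hp : p ∈ V)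
    (hmin : ∀ g ∈ V, discNormSq w y (u - q) ≤ discNormSq w y (u - g)) :
    discNormSq w y (p - q) ≤ discNormSq w y (u - p) := by
  simp only [discNormSq_eq_discForm] at hmin ⊢
  exact (discForm_isSymm w y).apply_sub_le_of_minimizes
    (fun v => discNormSq_eq_discForm w y v ▸ discNormSq_nonneg hw y v) hq hp hmin

theorem discNormSq_sum_smul {m : ℕ} (w : X → ℝ) (φ : Fin m → X → ℝ) (y : Fin n → X)
    (b : Fin m → ℝ) : discNormSq w y (∑ j, b j • φ j) = b ⬝ᵥ gram w φ y *ᵥ b := by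
  rw [discNormSq_eq_discForm, LinearMap.BilinForm.sum_smul_apply_sum_smul]
  rfl

end Discrete

section Orthonormal

variable {α : Type*} [MeasurableSpace α] {μ : Measure α} {m : ℕ} {φ : Fin m → α → ℝ}

theorem integral_mul_sum_smul {f : α → ℝ} (hf : MemLp f 2 μ) (hφ : ∀ j, MemLp (φ j) 2 μ)
    (c : Fin m → ℝ) :
    ∫ t, f t * (∑ j, c j • φ j) t ∂μ = ∑ j, c j * ∫ t, f t * φ j t ∂μ := by
  simp only [Finset.sum_apply, Pi.smul_apply, smul_eq_mul, Finset.mul_sum]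
  rw [integral_finsetSum _ fun j _ => ((hf.integrable_mul (hφ j)).const_mul (c j)).congr
    (ae_of_all _ fun t => by simp only [Pi.mul_apply]; ring)]
  exact Finset.sum_congr rfl fun j _ => by
    rw [← integral_const_mul]
    exact integral_congr_ae (ae_of_all _ fun t => by ring)

theorem integral_mul_sum_smul_of_orthonormal (hφ : ∀ j, MemLp (φ j) 2 μ)
    (hortho : ∀ i j, (∫ t, φ i t * φ j t ∂μ) = if i = j then (1 : ℝ) else 0)
    (c : Fin m → ℝ) (j : Fin m) : ∫ t, φ j t * (∑ k, c k • φ k) t ∂μ = c j := by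
  rw [integral_mul_sum_smul (hφ j) hφ]
  simp [hortho]

end Orthonormal

section Projection

variable {X : Set (Fin d → ℝ)} {μ : Measure X} {m : ℕ} {φ : Fin m → X → ℝ}

def projCoeff (μ : Measure X) (φ : Fin m → X → ℝ) (u : X → ℝ) : Fin m → ℝ :=
  fun j => ∫ t, u t * φ j t ∂μ

theorem proj_eq_sum_smul (μ : Measure X) (φ : Fin m → X → ℝ) (u : X → ℝ) :
    proj μ φ u = ∑ j, projCoeff μ φ u j • φ j := by
  funext t
  simp [proj, projCoeff, Finset.sum_apply]

theorem proj_mem_Vspan (μ : Measure X) (φ : Fin m → X → ℝ) (u : X → ℝ) :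
    proj μ φ u ∈ Vspan φ := by
  rw [proj_eq_sum_smul]
  exact Submodule.sum_mem _ fun j _ =>
    Submodule.smul_mem _ _ (Submodule.subset_span (Set.mem_range_self j))

theorem memLp_sum_smul (hφ : ∀ j, MemLp (φ j) 2 μ) (c : Fin m → ℝ) :
    MemLp (∑ j, c j • φ j) 2 μ :=
  memLp_finsetSum' _ fun j _ => (hφ j).const_smul (c j)

theorem memLp_proj (hφ : ∀ j, MemLp (φ j) 2 μ) (u : X → ℝ) : MemLp (proj μ φ u) 2 μ := by
  rw [proj_eq_sum_smul]
  exact memLp_sum_smul hφ _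

theorem l2normSq_add_of_integral_mul_eq_zero {f g : X → ℝ} (hf : MemLp f 2 μ)
    (hg : MemLp g 2 μ) (hfg : ∫ t, f t * g t ∂μ = 0) :
    l2normSq μ (f + g) = l2normSq μ f + l2normSq μ g := by
  have hexpand : ∀ t, (f + g) t ^ 2 = f t ^ 2 + g t ^ 2 + 2 * (f t * g t) := fun t => by
    simp only [Pi.add_apply]
    ring
  simp only [l2normSq, hexpand]
  rw [integral_add (f := fun t => f t ^ 2 + g t ^ 2) (g := fun t => 2 * (f t * g t))
      (hf.integrable_sq.add hg.integrable_sq) ((hf.integrable_mul hg).const_mul 2),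
    integral_add hf.integrable_sq hg.integrable_sq, integral_const_mul, hfg, mul_zero, add_zero]

theorem integral_sub_proj_mul_eq_zero (hφ : ∀ j, MemLp (φ j) 2 μ)
    (hortho : ∀ i j, (∫ t, φ i t * φ j t ∂μ) = if i = j then (1 : ℝ) else 0)
    {u : X → ℝ} (hu : MemLp u 2 μ) (j : Fin m) :
    ∫ t, (u - proj μ φ u) t * φ j t ∂μ = 0 := by
  calc ∫ t, (u - proj μ φ u) t * φ j t ∂μ
      = ∫ t, u t * φ j t ∂μ - ∫ t, φ j t * proj μ φ u t ∂μ := by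
        rw [← integral_sub (f := fun t => u t * φ j t) (g := fun t => φ j t * proj μ φ u t)
          (hu.integrable_mul (hφ j)) ((hφ j).integrable_mul (memLp_proj hφ u))]
        exact integral_congr_ae (ae_of_all _ fun t => by simp only [Pi.sub_apply]; ring)
    _ = 0 := by
        rw [proj_eq_sum_smul, integral_mul_sum_smul_of_orthonormal hφ hortho, projCoeff,
          sub_self]

theorem l2normSq_sum_smul (hφ : ∀ j, MemLp (φ j) 2 μ)
    (hortho : ∀ i j, (∫ t, φ i t * φ j t ∂μ) = if i = j then (1 : ℝ) else 0)
    (c : Fin m → ℝ) : l2normSq μ (∑ j, c j • φ j) = c ⬝ᵥ c := by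
  simp only [l2normSq, sq]
  rw [integral_mul_sum_smul (memLp_sum_smul hφ c) hφ]
  refine Finset.sum_congr rfl fun j _ => ?_
  simp only [mul_comm _ (φ j _), integral_mul_sum_smul_of_orthonormal hφ hortho]

theorem l2normSq_sub_sum_smul (hφ : ∀ j, MemLp (φ j) 2 μ)
    (hortho : ∀ i j, (∫ t, φ i t * φ j t ∂μ) = if i = j then (1 : ℝ) else 0)
    {u : X → ℝ} (hu : MemLp u 2 μ) (c : Fin m → ℝ) :
    l2normSq μ (u - ∑ j, c j • φ j) =
      l2normSq μ (u - proj μ φ u) + (projCoeff μ φ u - c) ⬝ᵥ (projCoeff μ φ u - c) := by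
  have hsplit : u - ∑ j, c j • φ j = (u - proj μ φ u) + ∑ j, (projCoeff μ φ u - c) j • φ j := by
    simp only [proj_eq_sum_smul, Pi.sub_apply, sub_smul, Finset.sum_sub_distrib]
    abel
  have hcross : ∫ t, (u - proj μ φ u) t * (∑ j, (projCoeff μ φ u - c) j • φ j) t ∂μ = 0 := by
    rw [integral_mul_sum_smul (hu.sub (memLp_proj hφ u)) hφ]
    simp only [integral_sub_proj_mul_eq_zero hφ hortho hu, mul_zero, Finset.sum_const_zero]
  rw [hsplit, l2normSq_add_of_integral_mul_eq_zero (hu.sub (memLp_proj hφ u))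
    (memLp_sum_smul hφ _) hcross, l2normSq_sum_smul hφ hortho]

end Projection

theorem l2normSq_sub_le_of_Zstat_le {X : Set (Fin d → ℝ)} {μ : Measure X} {m n : ℕ}
    {w : X → ℝ} (hw : ∀ t, 0 ≤ w t) {φ : Fin m → X → ℝ} (hφ : ∀ j, MemLp (φ j) 2 μ)
    (hortho : ∀ i j, (∫ t, φ i t * φ j t ∂μ) = if i = j then (1 : ℝ) else 0)
    {u : X → ℝ} (hu : MemLp u 2 μ) {δ : ℝ} (hδ : δ < 1) {y : Fin n → X}
    (hZ : Zstat w φ y ≤ δ) {q : X → ℝ} (hq : q ∈ Vspan φ)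
    (hmin : ∀ g ∈ Vspan φ, discNormSq w y (u - q) ≤ discNormSq w y (u - g)) :
    l2normSq μ (u - q) ≤
      l2normSq μ (u - proj μ φ u) + (1 - δ)⁻¹ * discNormSq w y (u - proj μ φ u) := by
  obtain ⟨c, rfl⟩ := (Submodule.mem_span_range_iff_exists_fun ℝ).mp hq
  set b := projCoeff μ φ u - c
  have hPq : proj μ φ u - ∑ j, c j • φ j = ∑ j, b j • φ j := by
    simp only [b, proj_eq_sum_smul, Pi.sub_apply, sub_smul, Finset.sum_sub_distrib]
  have hb : (1 - δ) * (b ⬝ᵥ b) ≤ discNormSq w y (u - proj μ φ u) :=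
    calc (1 - δ) * (b ⬝ᵥ b) ≤ b ⬝ᵥ gram w φ y *ᵥ b :=
          one_sub_mul_dotProduct_le_of_specNorm_le hZ b
      _ = discNormSq w y (proj μ φ u - ∑ j, c j • φ j) := by rw [hPq, discNormSq_sum_smul]
      _ ≤ discNormSq w y (u - proj μ φ u) :=
          discNormSq_sub_le_of_minimizes hw y hq (proj_mem_Vspan μ φ u) hmin
  rw [l2normSq_sub_sum_smul hφ hortho hu c]
  gcongr
  rwa [le_inv_mul_iff₀ (sub_pos.2 hδ)]

section WithDensity

variable {α : Type*} [MeasurableSpace α] {μ : Measure α} {w : α → ℝ}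

theorem integrable_mul_withDensity_inv (hw : ∀ t, 0 < w t) (hwm : Measurable w) {f : α → ℝ}
    (hf : Integrable f μ) :
    Integrable (fun t => w t * f t) (μ.withDensity fun t => ENNReal.ofReal (w t)⁻¹) := by
  rw [integrable_withDensity_iff (f := fun t => ENNReal.ofReal (w t)⁻¹) (by fun_prop)
    (ae_of_all _ fun t => ENNReal.ofReal_lt_top)]
  refine hf.congr (ae_of_all _ fun t => ?_)
  simp only [ENNReal.toReal_ofReal (inv_nonneg.2 (hw t).le)]
  field_simp [(hw t).ne']

theorem integral_mul_withDensity_inv (hw : ∀ t, 0 < w t) (hwm : Measurable w) (f : α → ℝ) :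
    ∫ t, w t * f t ∂(μ.withDensity fun t => ENNReal.ofReal (w t)⁻¹) = ∫ t, f t ∂μ := by
  rw [integral_withDensity_eq_integral_toReal_smul (f := fun t => ENNReal.ofReal (w t)⁻¹)
    (by fun_prop) (ae_of_all _ fun t => ENNReal.ofReal_lt_top)]
  refine integral_congr_ae (ae_of_all _ fun t => ?_)
  simp only [ENNReal.toReal_ofReal (inv_nonneg.2 (hw t).le), smul_eq_mul]
  field_simp [(hw t).ne']

end WithDensity

section Selection

variable {α : Type*} [MeasurableSpace α]

theorem integral_comp_eval_pi {ι : Type*} [Fintype ι] (ν : Measure α) [IsProbabilityMeasure ν]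
    (i : ι) {F : α → ℝ} (hF : AEStronglyMeasurable F ν) :
    ∫ ω, F (ω i) ∂(Measure.pi fun _ : ι => ν) = ∫ x, F x ∂ν := by
  have hmp := measurePreserving_eval (fun _ : ι => ν) i
  rw [← hmp.map_eq] at hF
  exact (integral_map hmp.measurable.aemeasurable hF).symm.trans (by rw [hmp.map_eq])

theorem measurable_apply_select {M : ℕ} {I : (Fin M → α) → Fin M} (hI : Measurable I) :
    Measurable fun ω : Fin M → α => ω (I ω) :=
  (measurable_from_prod_countable_right (f := fun p : Fin M × (Fin M → α) => p.2 p.1)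
    fun i => measurable_pi_apply i).comp (hI.prodMk measurable_id)

variable {ν : Measure α} [IsProbabilityMeasure ν] {M : ℕ} {I : (Fin M → α) → Fin M}

theorem integrable_apply_select (hI : Measurable I) {F : α → ℝ} (hFm : Measurable F)
    (hF : Integrable F ν) :
    Integrable (fun ω => F (ω (I ω))) (Measure.pi fun _ : Fin M => ν) := by
  have hsum : Integrable (fun ω : Fin M → α => ∑ k, |F (ω k)|) (Measure.pi fun _ => ν) :=
    integrable_finsetSum _ fun k _ =>
      ((measurePreserving_eval (fun _ : Fin M => ν) k).integrable_comp_of_integrable hF).abs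
  refine hsum.mono' (hFm.comp (measurable_apply_select hI)).aestronglyMeasurable
    (ae_of_all _ fun ω => ?_)
  exact Finset.single_le_sum (f := fun k => |F (ω k)|) (fun k _ => abs_nonneg _)
    (Finset.mem_univ (I ω))

theorem integral_apply_select_le (hI : Measurable I) {F : α → ℝ} (hFm : Measurable F)
    (hF : Integrable F ν) (hF0 : ∀ x, 0 ≤ F x) :
    ∫ ω, F (ω (I ω)) ∂(Measure.pi fun _ : Fin M => ν) ≤ M * ∫ x, F x ∂ν := by
  have hcomp : ∀ k, Integrable (fun ω : Fin M → α => F (ω k)) (Measure.pi fun _ => ν) :=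
    fun k => (measurePreserving_eval (fun _ : Fin M => ν) k).integrable_comp_of_integrable hF
  calc ∫ ω, F (ω (I ω)) ∂(Measure.pi fun _ : Fin M => ν)
      ≤ ∫ ω, ∑ k, F (ω k) ∂(Measure.pi fun _ : Fin M => ν) :=
        integral_mono (integrable_apply_select hI hFm hF)
          (integrable_finsetSum _ fun k _ => hcomp k)
          fun ω => Finset.single_le_sum (f := fun k => F (ω k)) (fun k _ => hF0 _)
            (Finset.mem_univ (I ω))
    _ = M * ∫ x, F x ∂ν := by
        rw [integral_finsetSum _ fun k _ => hcomp k]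
        simp [integral_comp_eval_pi ν _ hF.aestronglyMeasurable]

theorem one_sub_pow_le_measureReal_select {Z : α → ℝ}
    (hmin : ∀ (ω : Fin M → α) i, Z (ω (I ω)) ≤ Z (ω i))
    {δ η : ℝ} (hη : 0 ≤ η) (hν : ν {x | δ < Z x} ≤ ENNReal.ofReal η) :
    1 - η ^ M ≤ (Measure.pi fun _ : Fin M => ν).real {ω | Z (ω (I ω)) ≤ δ} := by
  set P := Measure.pi fun _ : Fin M => ν
  have hcompl : {ω | Z (ω (I ω)) ≤ δ}ᶜ = Set.univ.pi fun _ => {x | δ < Z x} := by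
    ext ω
    simp only [Set.mem_compl_iff, Set.mem_ofPred_eq, not_le, Set.mem_pi, Set.mem_univ,
      true_implies]
    exact ⟨fun h i => h.trans_le (hmin ω i), fun h => h (I ω)⟩
  have hPc : P {ω | Z (ω (I ω)) ≤ δ}ᶜ ≤ ENNReal.ofReal (η ^ M) := by
    rw [hcompl, Measure.pi_pi, ENNReal.ofReal_pow hη]
    simp only [Finset.prod_const, Finset.card_univ, Fintype.card_fin]
    gcongr
  have hP := measure_univ_le_add_compl (μ := P) {ω | Z (ω (I ω)) ≤ δ}
  rw [measure_univ] at hP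
  rw [Measure.real, ← ENNReal.ofReal_le_iff_le_toReal (measure_ne_top _ _),
    ENNReal.ofReal_sub _ (by positivity), ENNReal.ofReal_one, tsub_le_iff_right]
  exact hP.trans (by gcongr)

end Selection

theorem integral_cond_le_add {Ω : Type*} [MeasurableSpace Ω] {P : Measure Ω} [IsFiniteMeasure P]
    {A : Set Ω} (hA : MeasurableSet A) (hPA : P A ≠ 0) {F H : Ω → ℝ} {a : ℝ}
    (hF0 : ∀ ω, 0 ≤ F ω) (hH : Integrable H P) (hH0 : ∀ ω, 0 ≤ H ω)
    (hFH : ∀ ω ∈ A, F ω ≤ a + H ω) :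
    ∫ ω, F ω ∂P[|A] ≤ a + (P.real A)⁻¹ * ∫ ω, H ω ∂P := by
  have := cond_isProbabilityMeasure (μ := P) hPA
  have hHA : Integrable H P[|A] := hH.restrict.smul_measure (ENNReal.inv_ne_top.mpr hPA)
  calc ∫ ω, F ω ∂P[|A] ≤ ∫ ω, (a + H ω) ∂P[|A] :=
        integral_mono_of_nonneg (ae_of_all _ hF0) ((integrable_const a).add hHA)
          (ae_cond_of_forall_mem hA hFH)
    _ = a + (P.real A)⁻¹ * ∫ ω in A, H ω ∂P := by
        rw [integral_add (integrable_const a) hHA, integral_const, probReal_univ, one_smul,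
          ProbabilityTheory.cond, integral_smul_measure, ENNReal.toReal_inv, smul_eq_mul]
        rfl
    _ ≤ a + (P.real A)⁻¹ * ∫ ω, H ω ∂P := by
        have := setIntegral_le_integral (s := A) hH (ae_of_all _ hH0)
        gcongr

section SampleStatistics

theorem continuous_specNorm_sub_one {m : ℕ} :
    Continuous fun A : Matrix (Fin m) (Fin m) ℝ => specNorm (A - 1) := by
  have : Continuous (Matrix.toEuclideanCLM (n := Fin m) (𝕜 := ℝ)) :=
    LinearMap.continuous_of_finiteDimensional
      (Matrix.toEuclideanCLM (n := Fin m) (𝕜 := ℝ)).toAlgEquiv.toLinearMap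
  unfold specNorm
  fun_prop

variable {X : Set (Fin d → ℝ)} {n : ℕ} {w : X → ℝ}

theorem measurable_Zstat {m : ℕ} {φ : Fin m → X → ℝ} (hwm : Measurable w)
    (hφm : ∀ j, Measurable (φ j)) : Measurable fun y : Fin n → X => Zstat w φ y := by
  have hgram : Measurable fun y : Fin n → X => fun j k => gram w φ y j k :=
    measurable_pi_lambda _ fun j => measurable_pi_lambda _ fun k => by
      simp only [gram, Matrix.of_apply]
      fun_prop
  exact (continuous_specNorm_sub_one.comp continuous_id.matrixOf).measurable.comp hgram

theorem measurable_discNormSq (hwm : Measurable w) {v : X → ℝ} (hvm : Measurable v) :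
    Measurable fun y : Fin n → X => discNormSq w y v := by
  unfold discNormSq
  fun_prop

variable {ν : Measure X} [IsProbabilityMeasure ν] {v : X → ℝ}

theorem integrable_discNormSq (h : Integrable (fun t => w t * v t ^ 2) ν) :
    Integrable (fun y => discNormSq w y v) (Measure.pi fun _ : Fin n => ν) :=
  (integrable_finsetSum _ fun i _ =>
    (measurePreserving_eval (fun _ : Fin n => ν) i).integrable_comp_of_integrable h).const_mul _

theorem integral_discNormSq_le (hw : ∀ t, 0 ≤ w t) (h : Integrable (fun t => w t * v t ^ 2) ν) :
    ∫ y, discNormSq w y v ∂(Measure.pi fun _ : Fin n => ν) ≤ ∫ t, w t * v t ^ 2 ∂ν := by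
  have hcomp : ∀ i, Integrable (fun y : Fin n → X => w (y i) * v (y i) ^ 2)
      (Measure.pi fun _ => ν) := fun i =>
    (measurePreserving_eval (fun _ : Fin n => ν) i).integrable_comp_of_integrable h
  simp only [discNormSq]
  rw [integral_const_mul, integral_finsetSum _ fun i _ => hcomp i]
  simp only [integral_comp_eval_pi ν _ h.aestronglyMeasurable (F := fun t => w t * v t ^ 2),
    Finset.sum_const, Finset.card_univ, Fintype.card_fin, nsmul_eq_mul]
  rcases Nat.eq_zero_or_pos n with rfl | hn
  · simpa using integral_nonneg fun t => mul_nonneg (hw t) (sq_nonneg (v t))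
  · exact le_of_eq (by field_simp)

end SampleStatistics

instance isProbabilityMeasure_bigP {X : Set (Fin d → ℝ)} (ρ : Measure X)
    [IsProbabilityMeasure ρ] (M n : ℕ) : IsProbabilityMeasure (bigP ρ M n) := by
  unfold bigP
  infer_instance

section Boosting

variable {X : Set (Fin d → ℝ)} {μ : Measure X} {w : X → ℝ} {ρ : Measure X}
  [IsProbabilityMeasure ρ] {v : X → ℝ} {M n : ℕ} {I : (Fin M → Fin n → X) → Fin M}

theorem integrable_discNormSq_select (hw : ∀ t, 0 < w t) (hwm : Measurable w)
    (hρ : ρ = μ.withDensity fun t => ENNReal.ofReal (w t)⁻¹) (hvm : Measurable v)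
    (hv : MemLp v 2 μ) (hI : Measurable I) :
    Integrable (fun ω => discNormSq w (ω (I ω)) v) (bigP ρ M n) :=
  integrable_apply_select hI (measurable_discNormSq hwm hvm)
    (integrable_discNormSq (hρ ▸ integrable_mul_withDensity_inv hw hwm hv.integrable_sq))

theorem integral_discNormSq_select_le (hw : ∀ t, 0 < w t) (hwm : Measurable w)
    (hρ : ρ = μ.withDensity fun t => ENNReal.ofReal (w t)⁻¹) (hvm : Measurable v)
    (hv : MemLp v 2 μ) (hI : Measurable I) :
    ∫ ω, discNormSq w (ω (I ω)) v ∂(bigP ρ M n) ≤ M * l2normSq μ v := by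
  have hw0 : ∀ t, 0 ≤ w t := fun t => (hw t).le
  have hg : Integrable (fun t => w t * v t ^ 2) ρ :=
    hρ ▸ integrable_mul_withDensity_inv hw hwm hv.integrable_sq
  refine (integral_apply_select_le hI (measurable_discNormSq hwm hvm) (integrable_discNormSq hg)
    (discNormSq_nonneg hw0 · v)).trans ?_
  gcongr
  calc _ ≤ ∫ t, w t * v t ^ 2 ∂ρ := integral_discNormSq_le hw0 hg
    _ = l2normSq μ v := by
        rw [hρ, integral_mul_withDensity_inv hw hwm]
        rfl

end Boosting

theorem boosted_lsq_quasi_optimality_general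
    {m n M : ℕ} (hM : 0 < M) {X : Set (Fin d → ℝ)} (μ : Measure X)
    (w : X → ℝ) (hw : ∀ t, 0 < w t) (hwm : Measurable w)
    (ρ : Measure X) [IsProbabilityMeasure ρ]
    (hρ : ρ = μ.withDensity fun t => ENNReal.ofReal (w t)⁻¹)
    (φ : Fin m → X → ℝ) (hφm : ∀ j, Measurable (φ j)) (hφ2 : ∀ j, MemLp (φ j) 2 μ)
    (hortho : ∀ i j, (∫ t, φ i t * φ j t ∂μ) = if i = j then (1 : ℝ) else 0)
    (δ η : ℝ) (hδ1 : δ < 1) (hη0 : 0 < η) (hη1 : η < 1)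
    (hPZ : (Measure.pi fun _ : Fin n => ρ) {y | δ < Zstat w φ y} ≤ ENNReal.ofReal η)
    (Istar : (Fin M → Fin n → X) → Fin M) (hIm : Measurable Istar)
    (hmin : ∀ (ω : Fin M → Fin n → X) (i : Fin M),
      Zstat w φ (ω (Istar ω)) ≤ Zstat w φ (ω i))
    (u : X → ℝ) (hum : Measurable u) (hu2 : MemLp u 2 μ)
    (Q : (Fin n → X) → X → ℝ)
    (hQ : ∀ y : Fin n → X, Q y ∈ Vspan φ ∧
      ∀ g ∈ Vspan φ, discNormSq w y (u - Q y) ≤ discNormSq w y (u - g)) :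
    (∫ ω, l2normSq μ (u - Q (ω (Istar ω)))
        ∂((bigP ρ M n)[|{ω | Zstat w φ (ω (Istar ω)) ≤ δ}])) ≤
      (1 + (1 - δ)⁻¹ * (1 - η ^ M)⁻¹ * M) * l2normSq μ (u - proj μ φ u) := by
  set e := u - proj μ φ u
  set A := {ω : Fin M → Fin n → X | Zstat w φ (ω (Istar ω)) ≤ δ}
  have hw0 : ∀ t, 0 ≤ w t := fun t => (hw t).le
  have he : MemLp e 2 μ := hu2.sub (memLp_proj hφ2 u)
  have hem : Measurable e := hum.sub (Finset.measurable_sum _ fun j _ => (hφm j).const_mul _)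
  have hδ : 0 < 1 - δ := sub_pos.2 hδ1
  have hPA : 1 - η ^ M ≤ (bigP ρ M n).real A := one_sub_pow_le_measureReal_select hmin hη0.le hPZ
  have hηM : 0 < 1 - η ^ M := sub_pos.2 (pow_lt_one₀ hη0.le hη1 hM.ne')
  have hPA0 : bigP ρ M n A ≠ 0 := fun h => by
    rw [Measure.real, h, ENNReal.toReal_zero] at hPA
    linarith
  have hAm : MeasurableSet A :=
    measurableSet_le ((measurable_Zstat hwm hφm).comp (measurable_apply_select hIm))
      measurable_const
  calc _ ≤ l2normSq μ e + ((bigP ρ M n).real A)⁻¹ *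
        ∫ ω, (1 - δ)⁻¹ * discNormSq w (ω (Istar ω)) e ∂(bigP ρ M n) :=
        integral_cond_le_add hAm hPA0 (fun ω => integral_nonneg fun t => sq_nonneg _)
          ((integrable_discNormSq_select hw hwm hρ hem he hIm).const_mul _)
          (fun ω => mul_nonneg (inv_nonneg.2 hδ.le) (discNormSq_nonneg hw0 _ e))
          fun ω hω => l2normSq_sub_le_of_Zstat_le hw0 hφ2 hortho hu2 hδ1 hω (hQ _).1 (hQ _).2
    _ ≤ l2normSq μ e + (1 - η ^ M)⁻¹ * ((1 - δ)⁻¹ * (M * l2normSq μ e)) := by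
        rw [integral_const_mul]
        gcongr
        · exact mul_nonneg (inv_nonneg.2 hδ.le) (integral_nonneg fun ω => discNormSq_nonneg hw0 _ e)
        · exact integral_discNormSq_select_le hw hwm hρ hem he hIm
    _ = (1 + (1 - δ)⁻¹ * (1 - η ^ M)⁻¹ * M) * l2normSq μ e := by ring

/-- quasi-optimality in expectation of the boosted weighted least-squares
projection. -/
theorem boosted_lsq_quasi_optimality
    {m n M : ℕ} (hM : 0 < M) {X : Set (Fin d → ℝ)} (μ : Measure X) [IsProbabilityMeasure μ]
    (w : X → ℝ) (hw : ∀ t, 0 < w t) (hwm : Measurable w)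
    (ρ : Measure X) [IsProbabilityMeasure ρ]
    (hρ : ρ = μ.withDensity fun t => ENNReal.ofReal (w t)⁻¹)
    (φ : Fin m → X → ℝ) (hφm : ∀ j, Measurable (φ j)) (hφ2 : ∀ j, MemLp (φ j) 2 μ)
    (hortho : ∀ i j, (∫ t, φ i t * φ j t ∂μ) = if i = j then (1 : ℝ) else 0)
    (δ η : ℝ) (hδ0 : 0 < δ) (hδ1 : δ < 1) (hη0 : 0 < η) (hη1 : η < 1)
    (hPZ : (Measure.pi fun _ : Fin n => ρ) {y | δ < Zstat w φ y} ≤ ENNReal.ofReal η)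
    (Istar : (Fin M → Fin n → X) → Fin M) (hIm : Measurable Istar)
    (hmin : ∀ (ω : Fin M → Fin n → X) (i : Fin M),
      Zstat w φ (ω (Istar ω)) ≤ Zstat w φ (ω i))
    (hexch : ∀ σ : Equiv.Perm (Fin M),
      Measure.map (fun ω : Fin M → Fin n → X => ((fun i => ω (σ i)), σ.symm (Istar ω)))
          (bigP ρ M n) =
        Measure.map (fun ω => (ω, Istar ω)) (bigP ρ M n))
    (u : X → ℝ) (hum : Measurable u) (hu2 : MemLp u 2 μ)
    (Q : (Fin n → X) → X → ℝ)
    (hQ : ∀ y : Fin n → X, Q y ∈ Vspan φ ∧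
      ∀ g ∈ Vspan φ, discNormSq w y (u - Q y) ≤ discNormSq w y (u - g)) :
    (∫ ω, l2normSq μ (u - Q (ω (Istar ω)))
        ∂((bigP ρ M n)[|{ω | Zstat w φ (ω (Istar ω)) ≤ δ}])) ≤
      (1 + (1 - δ)⁻¹ * (1 - η ^ M)⁻¹ * M) * l2normSq μ (u - proj μ φ u) :=
  boosted_lsq_quasi_optimality_general hM μ w hw hwm ρ hρ φ hφm hφ2 hortho δ η hδ1 hη0 hη1 hPZ Istar
    hIm hmin u hum hu2 Q hQ
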